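/- arXiv:2109.14582 — 3 statements merged into one kernel-verified Lean document; each statement's English description precedes it below -/
import Mathlib

section
/- Identify the element x = ω₊p + ω₋q of H ⊕ H (with p, q ∈ H and ω₊ = (1,0), ω₋ = (0,1)) and define its conjugate by x̄ = ω₊p^c + ω₋q^c, its trace t(x) = x + x̄, and its norm n(x) = x·x̄. Then x lies in the quadratic cone (i.e. t(x) and n(x) are 'real', meaning both components equal and real, with 4n(x) ≥ t(x)² when x is non-real) if and only if Re(p) = Re(q) and |Im(p)| = |Im(q)|. -/
/-! Trace and norm of a quaternion are always real: `p + p^c = 2 Re p` and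
`p p^c = Re(p)² + |Im p|²`. So the trace and norm of `x` are real exactly when `p` and `q`
share their real part and the length of their imaginary part, and then
`4 n(x) - t(x)² = 4 |Im p|²`, which is positive precisely when `x` is not real. -/

namespace Quaternion

variable {R : Type*} [CommRing R]

theorem eq_coe_iff {a : ℍ[R]} {r : R} : a = r ↔ a.re = r ∧ a.im = 0 := by
  constructor
  · rintro rfl
    exact ⟨re_coe r, im_coe r⟩
  · rintro ⟨hre, him⟩
    rw [← re_add_im a, hre, him, add_zero]

theorem self_add_star_eq_coe_iff {a : ℍ[R]} {t : R} : a + star a = t ↔ 2 * a.re = t := by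
  rw [self_add_star', coe_inj]

theorem self_mul_star_eq_coe_iff {a : ℍ[R]} {n : R} : a * star a = n ↔ normSq a = n := by
  rw [self_mul_star, coe_inj]

theorem normSq_eq_re_sq_add_norm_im_sq (a : ℍ) : normSq a = a.re ^ 2 + ‖a.im‖ ^ 2 := by
  rw [sq ‖a.im‖, ← normSq_eq_norm_mul_self, normSq_def', normSq_def']
  simp only [re_im, imI_im, imJ_im, imK_im]
  ring

end Quaternion

open Quaternion in
/-- `x = ω₊p + ω₋q ∈ ℍ ⊕ ℍ` lies in the quadratic cone iff `Re p = Re q` and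
`|Im p| = |Im q|`. -/
theorem mem_quadratic_cone_iff (p q : Quaternion ℝ) :
    ((∃ r : ℝ, p = (r : Quaternion ℝ) ∧ q = (r : Quaternion ℝ)) ∨
      (∃ t n : ℝ, p + star p = (t : Quaternion ℝ) ∧ q + star q = (t : Quaternion ℝ) ∧
        p * star p = (n : Quaternion ℝ) ∧ q * star q = (n : Quaternion ℝ) ∧
        t ^ 2 < 4 * n))
    ↔ (p.re = q.re ∧ ‖p.im‖ = ‖q.im‖) := by
  simp only [self_add_star_eq_coe_iff, self_mul_star_eq_coe_iff, normSq_eq_re_sq_add_norm_im_sq]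
  simp only [eq_coe_iff]
  constructor
  · rintro (⟨r, ⟨rfl, hp⟩, hq, hq'⟩ | ⟨t, n, rfl, ht, rfl, hn, -⟩)
    · simp [hp, hq, hq']
    · have hre : p.re = q.re := by linarith
      refine ⟨hre, (sq_eq_sq₀ (norm_nonneg _) (norm_nonneg _)).1 ?_⟩
      rw [hre] at hn
      linarith
  · rintro ⟨hre, him⟩
    rcases eq_or_ne p.im 0 with hp | hp
    · refine Or.inl ⟨p.re, ⟨rfl, hp⟩, hre.symm, norm_eq_zero.1 ?_⟩
      rw [← him, hp, norm_zero]
    · refine Or.inr ⟨_, _, rfl, by rw [hre], rfl, by rw [hre, him], ?_⟩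
      have := norm_pos_iff.2 hp
      nlinarith
end

section
/- Let a₁ ∈ H be a non-real quaternion. Then the set of quaternions p satisfying p² - 2Re(a₁)p + |a₁|² = 0 is exactly the 2-sphere {Re(a₁) + I·|Im(a₁)| : I ∈ H, I² = -1}. Consequently, for α = ω₊a₁ + ω₋a₂ in H ⊕ H with a₁, a₂ non-real, the zero set of p(x) = x² - x(α+α̅) + αα̅ is the product of the 2-sphere through a₁ with the 2-sphere through a₂. -/
/-!
Every quaternion satisfies its own characteristic equation `p² - 2 Re(p) p + |p|² = 0`, hence
`p² - 2 Re(a) p + |a|² = 2 (Re p - Re a) p + (|a|² - |p|²)`. If `Re p ≠ Re a` this forces `p` to be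
real, and then the left side is `(p - Re a)² + |Im a|² > 0`. So the roots are exactly the `p` with
`Re p = Re a` and `|Im p| = |Im a|`, i.e. `Re a + |Im a| I` with `I` a unit pure imaginary
quaternion, and these `I` are exactly the square roots of `-1`. In `ℍ ⊕ ℍ` everything is
componentwise, and `α + α̅`, `αα̅` are real in each component.
-/

namespace Quaternion

section CommRing

variable {R : Type*} [CommRing R]

theorem normSq_eq_re_sq_add_normSq_im (a : ℍ[R]) : normSq a = a.re ^ 2 + normSq a.im := by
  simp only [normSq_def', re_im, imI_im, imJ_im, imK_im]
  ring

theorem sq_sub_two_re_mul_add_normSq_self (p : ℍ[R]) :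
    p ^ 2 - ((2 * p.re : R) : ℍ[R]) * p + normSq p = 0 := by
  rw [← self_add_star', ← star_mul_self, sq, add_mul]
  abel

theorem sq_sub_two_re_mul_add_normSq_eq (a p : ℍ[R]) :
    p ^ 2 - ((2 * a.re : R) : ℍ[R]) * p + normSq a =
      ((2 * (p.re - a.re) : R) : ℍ[R]) * p + ((normSq a - normSq p : R) : ℍ[R]) := by
  rw [← sub_eq_zero, ← sq_sub_two_re_mul_add_normSq_self p]
  push_cast
  noncomm_ring

theorem sq_sub_mul_self_add_star_add_mul_star (a x : ℍ[R]) :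
    x ^ 2 - x * (a + star a) + a * star a = x ^ 2 - ((2 * a.re : R) : ℍ[R]) * x + normSq a := by
  rw [self_add_star', self_mul_star, ← coe_commutes]

end CommRing

section OrderedRing

variable {R : Type*} [CommRing R] [LinearOrder R] [IsStrictOrderedRing R]

theorem sq_sub_two_re_mul_add_normSq_eq_zero_iff {a : ℍ[R]} (ha : a.im ≠ 0) (p : ℍ[R]) :
    p ^ 2 - ((2 * a.re : R) : ℍ[R]) * p + normSq a = 0 ↔
      p.re = a.re ∧ normSq p.im = normSq a.im := by
  rw [sq_sub_two_re_mul_add_normSq_eq, normSq_eq_re_sq_add_normSq_im a,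
    normSq_eq_re_sq_add_normSq_im p]
  constructor
  · intro h
    have h_re := congr_arg (·.re) h
    have h_im := congr_arg (·.im) h
    simp only [coe_mul_eq_smul, re_add, re_smul, re_coe, re_zero, im_add, im_smul, im_coe,
      add_zero, im_zero, smul_eq_mul] at h_re h_im
    have hre : p.re = a.re := by
      by_contra hne
      have hp : p.im = 0 := (smul_eq_zero.1 h_im).resolve_left
        (mul_ne_zero two_ne_zero (sub_ne_zero.2 hne))
      have ha_pos : 0 < normSq a.im := normSq_nonneg.lt_of_ne' (normSq_ne_zero.2 ha)
      rw [hp, map_zero] at h_re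
      nlinarith [sq_nonneg (p.re - a.re)]
    refine ⟨hre, ?_⟩
    rw [hre] at h_re
    linarith
  · rintro ⟨hre, him⟩
    rw [hre, him]
    simp

end OrderedRing

theorem sq_eq_neg_one_iff {I : ℍ} : I ^ 2 = -1 ↔ I.re = 0 ∧ ‖I‖ = 1 := by
  constructor
  · intro h
    have hn : ‖I‖ = 1 := by
      have := congr_arg norm h
      rwa [norm_pow, norm_neg, norm_one, pow_eq_one_iff_of_nonneg (norm_nonneg I) two_ne_zero]
        at this
    refine ⟨sq_eq_neg_normSq.1 ?_, hn⟩
    rw [h, normSq_eq_norm_mul_self, hn, mul_one, coe_one]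
  · rintro ⟨hre, hn⟩
    rw [sq_eq_neg_normSq.2 hre, normSq_eq_norm_mul_self, hn, mul_one, coe_one]

theorem exists_sq_eq_neg_one_and_eq_norm_smul {v : ℍ} (hv : v.re = 0) :
    ∃ I : ℍ, I ^ 2 = -1 ∧ v = ‖v‖ • I := by
  rcases eq_or_ne v 0 with rfl | hv0
  · refine ⟨(Complex.I : ℍ), ?_, by simp⟩
    rw [sq, ← coeComplex_mul, ← sq, Complex.I_sq]
    ext <;> simp
  · refine ⟨‖v‖⁻¹ • v, sq_eq_neg_one_iff.2 ⟨by simp [hv], norm_smul_inv_norm hv0⟩, ?_⟩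
    rw [smul_inv_smul₀ (norm_ne_zero_iff.2 hv0)]

theorem exists_sq_eq_neg_one_and_eq_re_add_norm_im_smul_iff {a p : ℍ} :
    (∃ I : ℍ, I ^ 2 = -1 ∧ p = (a.re : ℍ) + ‖a.im‖ • I) ↔ p.re = a.re ∧ ‖p.im‖ = ‖a.im‖ := by
  constructor
  · rintro ⟨I, hI, rfl⟩
    obtain ⟨hre, hn⟩ := sq_eq_neg_one_iff.1 hI
    have hI_im : I.im = I := by rw [← re_add_im I, hre]; simp
    simp [hre, hI_im, norm_smul, hn]
  · rintro ⟨hre, hn⟩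
    obtain ⟨I, hI, hpI⟩ := exists_sq_eq_neg_one_and_eq_norm_smul p.re_im
    exact ⟨I, hI, by rw [← hre, ← hn, ← hpI, re_add_im]⟩

theorem setOf_sq_sub_two_re_mul_add_normSq_eq_zero {a : ℍ} (ha : a.im ≠ 0) :
    {p : ℍ | p ^ 2 - ((2 * a.re : ℝ) : ℍ) * p + ((normSq a : ℝ) : ℍ) = 0} =
      {p | ∃ I : ℍ, I ^ 2 = -1 ∧ p = (a.re : ℍ) + ‖a.im‖ • I} := by
  ext p
  rw [Set.mem_ofPred_eq, Set.mem_ofPred_eq, sq_sub_two_re_mul_add_normSq_eq_zero_iff ha,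
    exists_sq_eq_neg_one_and_eq_re_add_norm_im_smul_iff, normSq_eq_norm_mul_self,
    normSq_eq_norm_mul_self, mul_self_inj (norm_nonneg _) (norm_nonneg _)]

end Quaternion

/-- The zero set of the characteristic polynomial of a non-real quaternion is a 2-sphere,
and in `ℍ ⊕ ℍ` the zero set of `x² - x(α+α̅) + αα̅` is a product of two 2-spheres. -/
theorem zero_set_characteristic_poly (a₁ a₂ : Quaternion ℝ)
    (h₁ : a₁.im ≠ 0) (h₂ : a₂.im ≠ 0) :
    ({p : Quaternion ℝ |
        p ^ 2 - ((2 * a₁.re : ℝ) : Quaternion ℝ) * p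
          + ((Quaternion.normSq a₁ : ℝ) : Quaternion ℝ) = 0}
      = {p : Quaternion ℝ | ∃ I : Quaternion ℝ, I ^ 2 = -1 ∧
          p = ((a₁.re : ℝ) : Quaternion ℝ) + ‖a₁.im‖ • I}) ∧
    ({x : Quaternion ℝ × Quaternion ℝ |
        x ^ 2 - x * ((a₁, a₂) + star (a₁, a₂)) + (a₁, a₂) * star (a₁, a₂) = 0}
      = ({p : Quaternion ℝ | ∃ I : Quaternion ℝ, I ^ 2 = -1 ∧
            p = ((a₁.re : ℝ) : Quaternion ℝ) + ‖a₁.im‖ • I} ×ˢ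
          {p : Quaternion ℝ | ∃ I : Quaternion ℝ, I ^ 2 = -1 ∧
            p = ((a₂.re : ℝ) : Quaternion ℝ) + ‖a₂.im‖ • I})) := by
  refine ⟨Quaternion.setOf_sq_sub_two_re_mul_add_normSq_eq_zero h₁, ?_⟩
  rw [← Quaternion.setOf_sq_sub_two_re_mul_add_normSq_eq_zero h₁,
    ← Quaternion.setOf_sq_sub_two_re_mul_add_normSq_eq_zero h₂]
  ext x
  simp only [Set.mem_prod, Set.mem_ofPred_eq, Prod.ext_iff, Prod.fst_add, Prod.fst_sub,
    Prod.fst_mul, Prod.pow_fst, Prod.fst_star, Prod.snd_add, Prod.snd_sub, Prod.snd_mul,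
    Prod.pow_snd, Prod.snd_star, Prod.fst_zero, Prod.snd_zero,
    Quaternion.sq_sub_mul_self_add_star_add_mul_star]
end

section
/- For quaternions a', b', c', d' with a' invertible, the squared norm of a'(d' - c'(a')⁻¹b') equals |a'|²|d'|² + |c'|²|b'|² - 2Re(d'·(b')^c·a'·(c')^c). -/
/-!
Expand `|d - c a⁻¹ b|²` by the polarization identity `|x - y|² = |x|² + |y|² - 2 Re(x y^c)`.
Since `(a⁻¹)^c = a / |a|²`, the cross term `Re(d (c a⁻¹ b)^c) = Re(d b^c (a⁻¹)^c c^c)` equals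
`Re(d b^c a c^c) / |a|²`, and multiplicativity of the norm clears the denominator `|a|²`.
-/

namespace Quaternion

theorem normSq_sub {R : Type*} [CommRing R] (a b : ℍ[R]) :
    normSq (a - b) = normSq a + normSq b - 2 * (a * star b).re := by
  rw [sub_eq_add_neg, normSq_add, normSq_neg, star_neg, mul_neg, re_neg]
  ring

variable {R : Type*} [Field R]

theorem star_inv_eq_inv_normSq_smul (a : ℍ[R]) : star a⁻¹ = (normSq a)⁻¹ • a := by
  rw [inv_def, star_smul, star_star]

theorem re_mul_star_mul_inv_mul (a b c d : ℍ[R]) :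
    (d * star (c * a⁻¹ * b)).re = (normSq a)⁻¹ * (d * star b * a * star c).re := by
  rw [star_mul, star_mul, star_inv_eq_inv_normSq_smul, smul_mul_assoc, mul_smul_comm,
    mul_smul_comm, re_smul, smul_eq_mul]
  simp only [mul_assoc]

theorem normSq_mul_sub_mul_inv_mul [LinearOrder R] [IsStrictOrderedRing R] {a : ℍ[R]}
    (ha : a ≠ 0) (b c d : ℍ[R]) :
    normSq (a * (d - c * a⁻¹ * b))
      = normSq a * normSq d + normSq c * normSq b - 2 * (d * star b * a * star c).re := by
  have hA : normSq a ≠ 0 := normSq_ne_zero.2 ha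
  rw [map_mul, normSq_sub, re_mul_star_mul_inv_mul, map_mul, map_mul, normSq_inv]
  field_simp

end Quaternion

/-- For quaternions `a', b', c', d'` with `a'` invertible,
`|a'(d' - c'(a')⁻¹b')|² = |a'|²|d'|² + |c'|²|b'|² - 2Re(d'·b'^c·a'·c'^c)`. -/
theorem normSq_entry_formula (a b c d : Quaternion ℝ) (ha : a ≠ 0) :
    Quaternion.normSq (a * (d - c * a⁻¹ * b))
      = Quaternion.normSq a * Quaternion.normSq d
        + Quaternion.normSq c * Quaternion.normSq b
        - 2 * (d * star b * a * star c).re :=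
  Quaternion.normSq_mul_sub_mul_inv_mul ha b c d
end
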